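/- arXiv:1109.6835 — 4 statements merged into one kernel-verified Lean document; each statement's English description precedes it below -/
import Mathlib

section
/- Let P_m, ..., P_{m+n-1} be polynomials in C[x_1,...,x_n] where each P_k = ρ_k + P̃_{k-1}, with ρ_k the k-th power sum polynomial and P̃_{k-1} an arbitrary polynomial of total degree less than k. Then the variety V_n ⊆ C^n defined by P_m = P_{m+1} = ... = P_{m+n-1} = 0 is a finite set. -/
/-!
The power sums `ρ_m, …, ρ_{m+n-1}` have no common zero but `0`: testing
`∑ i, y_i ^ m * p (y_i) = 0` against the Lagrange basis polynomial (of degree `< n`) of a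
value `c` of `y` on the set of values of `y` gives `#{i | y_i = c} * c ^ m = 0`. By the
Nullstellensatz some `X_i ^ N` lies in the ideal of the `ρ_k`, with coefficients `B_ik`
homogeneous of degree `N - k`, so modulo the ideal `J` of the `P_k` it is congruent to
`-∑ k, B_ik * P̃_{k-1}`, of degree `< N`. Hence `ℂ[x] ⧸ J` is spanned by polynomials of degree
`≤ n (N - 1)`, so it is finite-dimensional and has finitely many characters; the points of `V_n`
give pairwise distinct characters.
-/

open MvPolynomial

theorem sum_pow_mul_eval_eq_zero {K ι : Type*} [Field K] [Fintype ι] {y : ι → K} {m D : ℕ}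
    (h : ∀ j < D, ∑ i, y i ^ (m + j) = 0) {p : Polynomial K} (hp : p.natDegree < D) :
    ∑ i, y i ^ m * p.eval (y i) = 0 := by
  simp only [Polynomial.eval_eq_sum_range' hp, Finset.mul_sum]
  rw [Finset.sum_comm]
  refine Finset.sum_eq_zero fun j hj => ?_
  simp only [mul_left_comm _ (p.coeff j), ← pow_add, ← Finset.mul_sum,
    h j (Finset.mem_range.mp hj), mul_zero]

theorem eq_zero_of_sum_pow_add_eq_zero {K ι : Type*} [Field K] [CharZero K] [Fintype ι]
    (y : ι → K) (m : ℕ) (h : ∀ j < Fintype.card ι, ∑ i, y i ^ (m + j) = 0) : y = 0 := by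
  classical
  funext i₀
  set s := Finset.univ.image y
  set b := Lagrange.basis s id (y i₀)
  have hinj : Set.InjOn id (s : Set K) := Function.injective_id.injOn
  have hs : ∀ i, y i ∈ s := fun i => Finset.mem_image_of_mem y (Finset.mem_univ i)
  have hdeg : b.natDegree < Fintype.card ι := by
    have : 0 < s.card := Finset.card_pos.mpr ⟨_, hs i₀⟩
    have : s.card ≤ Fintype.card ι := Finset.card_image_le.trans_eq Finset.card_univ
    rw [Lagrange.natDegree_basis hinj (hs i₀)]
    omega
  have heval : ∀ i, y i ^ m * b.eval (y i) = if y i = y i₀ then y i₀ ^ m else 0 := by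
    intro i
    split_ifs with hi
    · have : b.eval (y i₀) = 1 := by simpa using Lagrange.eval_basis_self hinj (hs i₀)
      rw [hi, this, mul_one]
    · have : b.eval (y i) = 0 := by
        simpa using Lagrange.eval_basis_of_ne (v := id) (Ne.symm hi) (hs i)
      rw [this, mul_zero]
  have key := sum_pow_mul_eval_eq_zero h hdeg
  rw [Finset.sum_congr rfl fun i _ => heval i, Finset.sum_ite, Finset.sum_const_zero, add_zero,
    Finset.sum_const, nsmul_eq_mul] at key
  have hcard : ((Finset.univ.filter fun i => y i = y i₀).card : K) ≠ 0 :=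
    Nat.cast_ne_zero.mpr (Finset.card_pos.mpr ⟨i₀, by simp⟩).ne'
  exact eq_zero_of_pow_eq_zero ((mul_eq_zero.mp key).resolve_left hcard)

theorem Finsupp.exists_le_apply_of_card_mul_lt_degree {σ : Type*} [Fintype σ] {α : σ →₀ ℕ}
    {N : ℕ} (h : Fintype.card σ * (N - 1) < α.degree) : ∃ i, N ≤ α i := by
  by_contra! hlt
  have : ∑ i, α i ≤ ∑ _i : σ, (N - 1) :=
    Finset.sum_le_sum fun i _ => Nat.le_pred_of_lt (hlt i)
  rw [Finset.sum_const, Finset.card_univ, smul_eq_mul, ← Finsupp.degree_eq_sum] at this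
  omega

namespace MvPolynomial

variable {σ R ι : Type*}

section CommSemiring

variable [CommSemiring R]

variable (R) in
theorem isHomogeneous_psum [Fintype σ] (k : ℕ) :
    (psum σ R k).IsHomogeneous k :=
  IsHomogeneous.sum _ _ _ fun i _ => isHomogeneous_X_pow i k

attribute [local instance] gradedAlgebra in
theorem homogeneousComponent_mul_of_isHomogeneous {p q : MvPolynomial σ R} {d e : ℕ}
    (hq : q.IsHomogeneous e) (hed : e ≤ d) :
    homogeneousComponent d (p * q) = homogeneousComponent (d - e) p * q := by
  have := DirectSum.coe_decompose_mul_of_right_mem_of_le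
    (𝒜 := homogeneousSubmodule σ R) (a := p) hq hed
  simpa [← decomposition.decompose'_apply] using this

theorem exists_isHomogeneous_coeffs_of_mem_span {s : Finset ι} {q : ι → MvPolynomial σ R}
    {e : ι → ℕ} (hq : ∀ k ∈ s, (q k).IsHomogeneous (e k)) {f : MvPolynomial σ R} {d : ℕ}
    (hf : f.IsHomogeneous d) (hed : ∀ k ∈ s, e k ≤ d) (hfs : f ∈ Ideal.span (q '' s)) :
    ∃ B : ι → MvPolynomial σ R, (∀ k ∈ s, (B k).IsHomogeneous (d - e k)) ∧
      f = ∑ k ∈ s, B k * q k := by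
  obtain ⟨l, hl, hsum⟩ := (Finsupp.mem_span_image_iff_linearCombination _).mp hfs
  have hrep : f = ∑ k ∈ s, l k * q k := by
    rw [← hsum, Finsupp.linearCombination_apply, Finsupp.sum]
    refine Finset.sum_subset ((Finsupp.mem_supported _ _).mp hl) fun k _ hk => ?_
    rw [Finsupp.notMem_support_iff.mp hk, smul_eq_mul, zero_mul]
  refine ⟨fun k => homogeneousComponent (d - e k) (l k),
    fun k _ => homogeneousComponent_isHomogeneous _ _, ?_⟩
  calc f = homogeneousComponent d f := (homogeneousComponent_eq_self hf).symm
    _ = _ := by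
      rw [hrep, map_sum]
      exact Finset.sum_congr rfl fun k hk =>
        homogeneousComponent_mul_of_isHomogeneous (hq k hk) (hed k hk)

end CommSemiring

section CommRing

variable [CommRing R]

theorem exists_totalDegree_lt_sub_mem_span {s : Finset ι} {q P : ι → MvPolynomial σ R}
    {e : ι → ℕ} (hq : ∀ k ∈ s, (q k).IsHomogeneous (e k))
    (hP : ∀ k ∈ s, (P k - q k).totalDegree < e k) {f : MvPolynomial σ R} {d : ℕ}
    (hf : f.IsHomogeneous d) (hd : 0 < d) (hed : ∀ k ∈ s, e k ≤ d)
    (hfs : f ∈ Ideal.span (q '' s)) :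
    ∃ r : MvPolynomial σ R, r.totalDegree < d ∧ f - r ∈ Ideal.span (P '' s) := by
  obtain ⟨B, hB, rfl⟩ := exists_isHomogeneous_coeffs_of_mem_span hq hf hed hfs
  refine ⟨-∑ k ∈ s, B k * (P k - q k), ?_, ?_⟩
  · rw [totalDegree_neg]
    refine (totalDegree_finsetSum _ _).trans_lt ((Finset.sup_lt_iff hd).mpr fun k hk => ?_)
    have := (hB k hk).totalDegree_le
    have := hP k hk
    have := hed k hk
    exact (totalDegree_mul _ _).trans_lt (by omega)
  · rw [sub_neg_eq_add, ← Finset.sum_add_distrib]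
    refine Ideal.sum_mem _ fun k hk => ?_
    rw [← mul_add, add_sub_cancel]
    exact Ideal.mul_mem_left _ _ (Ideal.subset_span ⟨k, hk, rfl⟩)

/-- A monomial of degree `> card σ * (N - 1)` is divisible by some `X i ^ N`; replacing that
factor by `r i` lowers the degree without leaving the class modulo `J`. -/
theorem restrictTotalDegree_sup_restrictScalars_eq_top [Fintype σ]
    {J : Ideal (MvPolynomial σ R)} {N : ℕ} {r : σ → MvPolynomial σ R}
    (hr : ∀ i, (r i).totalDegree < N) (hJ : ∀ i, X i ^ N - r i ∈ J) :
    restrictTotalDegree σ R (Fintype.card σ * (N - 1)) ⊔ J.restrictScalars R = ⊤ := by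
  set S := restrictTotalDegree σ R (Fintype.card σ * (N - 1)) ⊔ J.restrictScalars R
  suffices h : ∀ d, ∀ f : MvPolynomial σ R, f.totalDegree ≤ d → f ∈ S from
    eq_top_iff.mpr fun f _ => h _ f le_rfl
  intro d
  induction d using Nat.strong_induction_on with
  | _ d ih =>
  intro f hf
  rw [f.as_sum]
  refine Submodule.sum_mem _ fun α hα => ?_
  have hαd : α.degree ≤ d := (le_totalDegree hα).trans hf
  by_cases hαM : α.degree ≤ Fintype.card σ * (N - 1)
  · exact Submodule.mem_sup_left <| (mem_restrictTotalDegree _ _ _).mpr <|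
      (totalDegree_monomial_le _ _).trans hαM
  obtain ⟨i, hi⟩ := Finsupp.exists_le_apply_of_card_mul_lt_degree (not_le.mp hαM)
  set β := α - Finsupp.single i N
  have hβα : β + Finsupp.single i N = α :=
    tsub_add_cancel_of_le (Finsupp.single_le_iff.mpr hi)
  have hsplit : monomial α (coeff α f) =
      monomial β (coeff α f) * (X i ^ N - r i) + monomial β (coeff α f) * r i := by
    rw [← mul_add, sub_add_cancel, X_pow_eq_monomial, monomial_mul, mul_one, hβα]
  have hdeg : (monomial β (coeff α f) * r i).totalDegree < d := by
    have hβ : β.degree + N = α.degree := by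
      rw [← hβα, map_add, Finsupp.degree_single]
    have hm : (monomial β (coeff α f)).totalDegree ≤ β.degree := totalDegree_monomial_le _ _
    exact (totalDegree_mul _ _).trans_lt (by have := hr i; omega)
  rw [hsplit]
  exact S.add_mem (Submodule.mem_sup_right (J.mul_mem_left _ (hJ i))) (ih _ hdeg _ le_rfl)

theorem moduleFinite_quotient_of_sup_eq_top [Finite σ] {J : Ideal (MvPolynomial σ R)}
    {M : ℕ} (h : restrictTotalDegree σ R M ⊔ J.restrictScalars R = ⊤) :
    Module.Finite R (MvPolynomial σ R ⧸ J) := by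
  refine Module.Finite.of_surjective
    ((Ideal.Quotient.mkₐ R J).toLinearMap ∘ₗ (restrictTotalDegree σ R M).subtype) ?_
  rintro ⟨f⟩
  obtain ⟨g, hg, j, hj, hgj⟩ := Submodule.mem_sup.mp (h ▸ Submodule.mem_top : f ∈ _)
  refine ⟨⟨g, hg⟩, Ideal.Quotient.eq.mpr ?_⟩
  simpa [← hgj] using J.neg_mem hj

end CommRing

section Field

variable {K : Type*} [Field K]

theorem exists_X_pow_mem_of_zeroLocus_subset_zero [IsAlgClosed K]
    [Fintype σ] {I : Ideal (MvPolynomial σ K)} (h : zeroLocus K I ⊆ {0}) :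
    ∃ t, ∀ i, (X i : MvPolynomial σ K) ^ t ∈ I := by
  have hrad : ∀ i, (X i : MvPolynomial σ K) ∈ I.radical := fun i => by
    rw [← vanishingIdeal_zeroLocus_eq_radical (K := K)]
    intro x hx
    simp [Set.mem_singleton_iff.mp (h hx)]
  choose t ht using fun i => Ideal.mem_radical_iff.mp (hrad i)
  exact ⟨Finset.univ.sup t, fun i =>
    I.pow_mem_of_pow_mem (ht i) (Finset.le_sup (Finset.mem_univ i))⟩

theorem zeroLocus_span_psum_subset_zero [CharZero K] [Fintype σ] {s : Set ℕ} {m : ℕ}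
    (hs : ∀ j < Fintype.card σ, m + j ∈ s) :
    zeroLocus K (Ideal.span (psum σ K '' s)) ⊆ {0} := by
  intro x hx
  rw [zeroLocus_span] at hx
  refine eq_zero_of_sum_pow_add_eq_zero x m fun j hj => ?_
  simpa [psum] using hx _ ⟨m + j, hs j hj, rfl⟩

theorem finite_zeroLocus_of_moduleFinite (J : Ideal (MvPolynomial σ K))
    [Module.Finite K (MvPolynomial σ K ⧸ J)] : (zeroLocus K J).Finite := by
  let χ : zeroLocus K J → (MvPolynomial σ K ⧸ J →ₐ[K] K) := fun x =>
    Ideal.Quotient.liftₐ J (aeval x.1) (mem_zeroLocus_iff.mp x.2)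
  have hχ : Function.Injective χ := by
    intro x y hxy
    ext i
    have := congrArg (fun φ => φ.comp (Ideal.Quotient.mkₐ K J) (X i)) hxy
    simpa only [χ, Ideal.Quotient.liftₐ_comp, aeval_X] using this
  have : Finite (zeroLocus K J) := Finite.of_injective χ hχ
  exact Set.toFinite _

end Field

end MvPolynomial

theorem stmt0_general (m n : ℕ)
    (P Pt : ℕ → MvPolynomial (Fin n) ℂ)
    (hdeg : ∀ k ∈ Finset.Icc m (m + n - 1), (Pt k).totalDegree < k)
    (hP : ∀ k ∈ Finset.Icc m (m + n - 1), P k = (∑ i : Fin n, X i ^ k) + Pt k) :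
    {x : Fin n → ℂ | ∀ k ∈ Finset.Icc m (m + n - 1), eval x (P k) = 0}.Finite := by
  set s := Finset.Icc m (m + n - 1)
  obtain ⟨t, ht⟩ := exists_X_pow_mem_of_zeroLocus_subset_zero <|
    zeroLocus_span_psum_subset_zero (K := ℂ) (σ := Fin n) (s := s) (m := m) fun j hj => by
      rw [Fintype.card_fin] at hj
      exact Finset.mem_coe.mpr (Finset.mem_Icc.mpr ⟨by omega, by omega⟩)
  -- `N` has to be positive, at least `t`, and at least every `k ∈ s`.
  set N := t + m + n + 1
  have hred : ∀ i, ∃ r : MvPolynomial (Fin n) ℂ, r.totalDegree < N ∧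
      X i ^ N - r ∈ Ideal.span (P '' s) := fun i =>
    exists_totalDegree_lt_sub_mem_span (e := id) (fun k _ => isHomogeneous_psum ℂ k)
      (fun k hk => by rw [hP k hk, psum, add_sub_cancel_left]; exact hdeg k hk)
      (isHomogeneous_X_pow i _) (by omega) (fun k hk => (Finset.mem_Icc.mp hk).2.trans (by omega))
      (Ideal.pow_mem_of_pow_mem _ (ht i) (by omega))
  choose r hr hrP using hred
  have := moduleFinite_quotient_of_sup_eq_top
    (restrictTotalDegree_sup_restrictScalars_eq_top hr hrP)
  refine (finite_zeroLocus_of_moduleFinite (Ideal.span (P '' s))).subset fun x hx => ?_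
  rw [zeroLocus_span]
  rintro _ ⟨k, hk, rfl⟩
  simpa using hx k hk

/-- If `P k = ρ_k + P̃_{k-1}` for `k = m, …, m+n-1`, where `ρ_k` is the `k`-th power sum
and `P̃_{k-1}` has total degree `< k`, then the common zero set of the `P k` in `ℂⁿ`
is finite. -/
theorem stmt0 (m n : ℕ) (hm : 1 ≤ m) (hn : 1 ≤ n)
    (P Pt : ℕ → MvPolynomial (Fin n) ℂ)
    (hdeg : ∀ k ∈ Finset.Icc m (m + n - 1), (Pt k).totalDegree < k)
    (hP : ∀ k ∈ Finset.Icc m (m + n - 1), P k = (∑ i : Fin n, X i ^ k) + Pt k) :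
    {x : Fin n → ℂ | ∀ k ∈ Finset.Icc m (m + n - 1), eval x (P k) = 0}.Finite :=
  stmt0_general m n P Pt hdeg hP
end

section
/- Let μ_1(t),...,μ_n(t) be real analytic functions on an interval solving μ_i'(t) = μ_i(t)^2 + κ_i for constants κ_i, and fix k ≥ 1. Then for each j ≥ 1 there exists a polynomial P̂_{k+j-1} in n variables of total degree less than k+j, with coefficients depending only on κ_1,...,κ_n, k, j, such that the j-th derivative of Q_k(t) := ∑_i μ_i(t)^k satisfies Q_k^{(j)}(t) = k(k+1)⋯(k+j−1) · (Q_{k+j}(t) + P̂_{k+j-1}(μ_1(t),...,μ_n(t))). -/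
/-!
The Riccati vector field `∑ᵢ (xᵢ² + κᵢ) ∂ᵢ` acts on polynomials as a derivation `D_κ`, and
along a solution `μ` differentiating `t ↦ P(μ(t))` amounts to applying `D_κ` to `P`. Hence
`Q_k^{(j)}` is the power sum `p_k` acted on by `D_κ^j`, evaluated along `μ`. Since
`D_κ p_m = m (p_{m+1} + ∑ᵢ κᵢ xᵢ^{m-1})` and `D_κ` raises the total degree by at most one,
induction on `j` gives `D_κ^j p_k = k(k+1)⋯(k+j-1) (p_{k+j} + P̂)` with `deg P̂ < k + j`.
-/

open MvPolynomial

namespace MvPolynomial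

section Degree

variable {R σ : Type*} [CommSemiring R] {f : σ → MvPolynomial σ R} {d : ℕ}

theorem totalDegree_mkDerivation_monomial_le (hf : ∀ i, (f i).totalDegree ≤ d + 1)
    (s : σ →₀ ℕ) (r : R) :
    (mkDerivation R f (monomial s r)).totalDegree ≤ s.degree + d := by
  rw [mkDerivation_monomial]
  refine (totalDegree_smul_le _ _).trans (totalDegree_finsetSum_le fun i hi => ?_)
  have hsi : Finsupp.single i 1 ≤ s := by
    rw [Finsupp.single_le_iff]
    exact Nat.one_le_iff_ne_zero.mpr (Finsupp.mem_support_iff.mp hi)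
  have hdeg : (s - Finsupp.single i 1).degree + 1 = s.degree := by
    simpa only [map_add, Finsupp.degree_single] using
      congrArg Finsupp.degree (tsub_add_cancel_of_le hsi)
  calc (monomial (s - Finsupp.single i 1) (s i : R) • f i).totalDegree
      ≤ (s - Finsupp.single i 1).degree + (d + 1) :=
        (totalDegree_mul _ _).trans (add_le_add (totalDegree_monomial_le _ _) (hf i))
    _ = s.degree + d := by omega

theorem totalDegree_mkDerivation_le (hf : ∀ i, (f i).totalDegree ≤ d + 1)
    (P : MvPolynomial σ R) :
    (mkDerivation R f P).totalDegree ≤ P.totalDegree + d := by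
  conv_lhs => rw [P.as_sum, map_sum]
  exact totalDegree_finsetSum_le fun m hm =>
    (totalDegree_mkDerivation_monomial_le hf m _).trans (by gcongr; exact le_totalDegree hm)

end Degree

section Riccati

variable {K σ : Type*} [Field K]

noncomputable def riccatiDerivation (κ : σ → K) :
    Derivation K (MvPolynomial σ K) (MvPolynomial σ K) :=
  mkDerivation K fun i => X i ^ 2 + C (κ i)

theorem totalDegree_riccatiDerivation_le (κ : σ → K) (P : MvPolynomial σ K) :
    (riccatiDerivation κ P).totalDegree ≤ P.totalDegree + 1 :=
  totalDegree_mkDerivation_le (fun i => (totalDegree_add _ _).trans (by simp)) P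

variable [Fintype σ]

theorem riccatiDerivation_psum (κ : σ → K) (m : ℕ) :
    riccatiDerivation κ (psum σ K m) =
      (m : K) • (psum σ K (m + 1) + ∑ i, κ i • X i ^ (m - 1)) := by
  rcases m with _ | m
  · simp [psum]
  simp only [psum, map_sum, Derivation.leibniz_pow, riccatiDerivation, mkDerivation_X,
    Finset.smul_sum, ← Finset.sum_add_distrib]
  refine Finset.sum_congr rfl fun i _ => ?_
  simp only [Nat.cast_smul_eq_nsmul, smul_eq_C_mul, nsmul_eq_mul, add_tsub_cancel_right]
  ring

theorem totalDegree_sum_smul_X_pow_le (c : σ → K) (m : ℕ) :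
    (∑ i, c i • X i ^ m : MvPolynomial σ K).totalDegree ≤ m :=
  totalDegree_finsetSum_le fun i _ => (totalDegree_smul_le _ _).trans (by simp)

theorem exists_iterate_riccatiDerivation_psum [CharZero K] (κ : σ → K) {k : ℕ} (hk : 1 ≤ k)
    (j : ℕ) :
    ∃ P : MvPolynomial σ K, P.totalDegree < k + j ∧
      (riccatiDerivation κ)^[j] (psum σ K k) =
        (∏ r ∈ Finset.range j, ((k + r : ℕ) : K)) • (psum σ K (k + j) + P) := by
  induction j with
  | zero => exact ⟨0, by rw [totalDegree_zero]; omega, by simp⟩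
  | succ j ih =>
    obtain ⟨P, hPdeg, hP⟩ := ih
    have hkj : ((k + j : ℕ) : K) ≠ 0 := Nat.cast_ne_zero.mpr (by omega)
    refine ⟨∑ i, κ i • X i ^ (k + j - 1) + ((k + j : ℕ) : K)⁻¹ • riccatiDerivation κ P,
      ?_, ?_⟩
    · refine (totalDegree_add _ _).trans_lt (max_lt ?_ ?_)
      · exact (totalDegree_sum_smul_X_pow_le _ _).trans_lt (by omega)
      · exact ((totalDegree_smul_le _ _).trans
          (totalDegree_riccatiDerivation_le κ P)).trans_lt (by omega)
    · rw [Function.iterate_succ_apply', hP, Derivation.map_smul, map_add,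
        riccatiDerivation_psum, Finset.prod_range_succ, mul_smul, ← add_assoc,
        smul_add _ _ (_ • _), smul_inv_smul₀ hkj]
      module

end Riccati

section Flow

variable {𝕜 σ : Type*} [NontriviallyNormedField 𝕜] {f : σ → MvPolynomial σ 𝕜}
  {μ : σ → 𝕜 → 𝕜}

theorem hasDerivAt_eval_mkDerivation {t : 𝕜}
    (hμ : ∀ i, HasDerivAt (μ i) (eval (μ · t) (f i)) t) (P : MvPolynomial σ 𝕜) :
    HasDerivAt (fun s => eval (μ · s) P) (eval (μ · t) (mkDerivation 𝕜 f P)) t := by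
  induction P using MvPolynomial.induction_on with
  | C a => simpa using hasDerivAt_const t a
  | add p q hp hq => simpa using hp.fun_add hq
  | mul_X p i hp => simpa [Derivation.leibniz, add_comm, mul_comm] using hp.fun_mul (hμ i)

theorem eqOn_iteratedDerivWithin_eval {I : Set 𝕜} (hI : IsOpen I)
    (hμ : ∀ i, ∀ t ∈ I, HasDerivAt (μ i) (eval (μ · t) (f i)) t) (P : MvPolynomial σ 𝕜)
    (j : ℕ) :
    Set.EqOn (iteratedDerivWithin j (fun s => eval (μ · s) P) I)
      (fun t => eval (μ · t) ((mkDerivation 𝕜 f)^[j] P)) I := by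
  induction j with
  | zero => exact fun t _ => by simp
  | succ j ih =>
    intro t ht
    rw [iteratedDerivWithin_succ, derivWithin_of_isOpen hI ht,
      (ih.eventuallyEq_of_mem (hI.mem_nhds ht)).deriv_eq, Function.iterate_succ_apply']
    exact (hasDerivAt_eval_mkDerivation (fun i => hμ i t ht) _).deriv

end Flow

end MvPolynomial

theorem stmt6_general (n : ℕ) (κ : Fin n → ℝ) (k j : ℕ) (hk : 1 ≤ k) :
    ∃ P : MvPolynomial (Fin n) ℝ, P.totalDegree < k + j ∧
      ∀ (I : Set ℝ), IsOpen I → ∀ (μ : Fin n → ℝ → ℝ),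
        (∀ i, ∀ t ∈ I, HasDerivAt (μ i) ((μ i t) ^ 2 + κ i) t) →
        ∀ t ∈ I,
          iteratedDerivWithin j (fun s => ∑ i, μ i s ^ k) I t
            = (∏ r ∈ Finset.range j, ((k + r : ℕ) : ℝ)) *
              ((∑ i, μ i t ^ (k + j)) + MvPolynomial.eval (fun i => μ i t) P) := by
  obtain ⟨P, hPdeg, hP⟩ := exists_iterate_riccatiDerivation_psum κ hk j
  refine ⟨P, hPdeg, fun I hI μ hμ t ht => ?_⟩
  have hQ := eqOn_iteratedDerivWithin_eval (f := fun i => X i ^ 2 + C (κ i)) hI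
    (by simpa using hμ) (psum (Fin n) ℝ k) j ht
  change _ = eval _ ((riccatiDerivation κ)^[j] _) at hQ
  rw [hP] at hQ
  simpa [psum, mul_add] using hQ

/-- For solutions `μᵢ` of the Riccati equations `μᵢ' = μᵢ² + κᵢ` on an open interval and
any `k ≥ 1`, `j ≥ 1`, there is a polynomial `P̂` in `n` variables of total degree `< k+j`,
depending only on `κ, k, j, n`, with
`Q_k^{(j)}(t) = k(k+1)⋯(k+j−1)·(Q_{k+j}(t) + P̂(μ₁(t),…,μₙ(t)))`,
where `Q_l(t) = ∑ᵢ μᵢ(t)^l`. -/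
theorem stmt6 (n : ℕ) (κ : Fin n → ℝ) (k j : ℕ) (hk : 1 ≤ k) (hj : 1 ≤ j) :
    ∃ P : MvPolynomial (Fin n) ℝ, P.totalDegree < k + j ∧
      ∀ (I : Set ℝ), IsOpen I → ∀ (μ : Fin n → ℝ → ℝ),
        (∀ i, ∀ t ∈ I, HasDerivAt (μ i) ((μ i t) ^ 2 + κ i) t) →
        ∀ t ∈ I,
          iteratedDerivWithin j (fun s => ∑ i, μ i s ^ k) I t
            = (∏ r ∈ Finset.range j, ((k + r : ℕ) : ℝ)) *
              ((∑ i, μ i t ^ (k + j)) + MvPolynomial.eval (fun i => μ i t) P) :=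
  stmt6_general n κ k j hk
end

section
/- Let μ_i : I → R (i = 1,...,n) be solutions of μ_i'(t) = μ_i(t)^2 + κ_i with constants κ_i on an open interval I. If for some k ≥ 1 the power sum Q_k(t) = ∑_i μ_i(t)^k is constant in t on I, then each μ_i is constant on I. -/
/-!
On `I`, each Riccati solution linearizes as `μᵢ = -uᵢ' / uᵢ`, where `uᵢ` is an entire solution of
`uᵢ'' = -κᵢ uᵢ` with `uᵢ'(t₀) = -μᵢ(t₀) uᵢ(t₀)`. Then `∑ᵢ (uᵢ' / uᵢ) ^ k = (-1) ^ k Q_k` is a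
meromorphic function on `ℂ` which is constant on `I`, hence constant off its poles. If
`μᵢ(t₀)² + κᵢ ≠ 0`, the function `uᵢ` has a zero `p`, which is simple because the energy
`u'² + κ u²` is conserved. Near `p` each `(z - p) uⱼ'(z) / uⱼ(z)` tends to `1` or `0` according
as `uⱼ(p) = 0` or not, so `(z - p) ^ k ∑ⱼ (uⱼ' / uⱼ) ^ k` tends to the number of `uⱼ` vanishing at
`p`, not to `0`: the sum has a pole at `p`. Hence `μᵢ' = μᵢ² + κᵢ` vanishes on `I`.
-/

open Filter Set Topology

section LinearODE

variable {E : Type*} [NormedAddCommGroup E] [NormedSpace ℝ E]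

theorem eq_zero_of_hasDerivAt_smul_of_mem_Icc {f : ℝ → E} {g : ℝ → ℝ} {a b : ℝ}
    (hg : ContinuousOn g (Icc a b)) (hf : ∀ t ∈ Icc a b, HasDerivAt f (g t • f t) t)
    (ha : f a = 0) : ∀ t ∈ Icc a b, f t = 0 := by
  obtain ⟨K, hK⟩ := isCompact_Icc.exists_bound_of_continuousOn hg
  refine eq_zero_of_abs_deriv_le_mul_abs_self_of_eq_zero_right (K := K)
    (fun t ht => (hf t ht).continuousAt.continuousWithinAt)
    (fun t ht => (hf t (Ico_subset_Icc_self ht)).hasDerivWithinAt) ha fun t ht => ?_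
  rw [norm_smul]
  exact mul_le_mul_of_nonneg_right (hK t (Ico_subset_Icc_self ht)) (norm_nonneg _)

theorem Set.OrdConnected.eqOn_zero_of_hasDerivAt_smul {I : Set ℝ} (hI : I.OrdConnected)
    {f : ℝ → E} {g : ℝ → ℝ} (hg : ContinuousOn g I)
    (hf : ∀ t ∈ I, HasDerivAt f (g t • f t) t) {t₀ : ℝ} (ht₀ : t₀ ∈ I) (h₀ : f t₀ = 0) :
    EqOn f 0 I := by
  intro t ht
  rcases le_total t₀ t with h | h
  · exact eq_zero_of_hasDerivAt_smul_of_mem_Icc (hg.mono (hI.out ht₀ ht))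
      (fun s hs => hf s (hI.out ht₀ ht hs)) h₀ t ⟨h, le_rfl⟩
  · have hJ : MapsTo Neg.neg (Icc (-t₀) (-t)) I := fun s hs =>
      hI.out ht ht₀ ⟨le_neg.mp hs.2, neg_le.mp hs.1⟩
    have := eq_zero_of_hasDerivAt_smul_of_mem_Icc (f := fun s => f (-s)) (g := fun s => -g (-s))
      (hg.comp continuousOn_neg hJ).neg
      (fun s hs => by
        have := (hf (-s) (hJ hs)).scomp s (hasDerivAt_neg s)
        rwa [neg_one_smul, ← neg_smul] at this)
      (by simpa using h₀) (-t) ⟨neg_le_neg h, le_rfl⟩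
    simpa using this

end LinearODE

structure IsOscillatorSolution (κ : ℂ) (u du : ℂ → ℂ) : Prop where
  hasDerivAt : ∀ z, HasDerivAt u (du z) z
  hasDerivAt_deriv : ∀ z, HasDerivAt du (-κ * u z) z

namespace IsOscillatorSolution

variable {κ : ℂ} {u du : ℂ → ℂ}

theorem energy_eq (hsol : IsOscillatorSolution κ u du) (z w : ℂ) :
    du z ^ 2 + κ * u z ^ 2 = du w ^ 2 + κ * u w ^ 2 := by
  have hE : ∀ z, HasDerivAt (fun z => du z ^ 2 + κ * u z ^ 2) 0 z := fun z => by
    refine (((hsol.hasDerivAt_deriv z).pow 2).add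
      (((hsol.hasDerivAt z).pow 2).const_mul κ)).congr_deriv ?_
    push_cast
    ring
  exact is_const_of_deriv_eq_zero (fun z => (hE z).differentiableAt) (fun z => (hE z).deriv) z w

theorem du_ne_zero_of_eq_zero (hsol : IsOscillatorSolution κ u du) {z₀ p : ℂ}
    (hz₀ : du z₀ ^ 2 + κ * u z₀ ^ 2 ≠ 0) (hp : u p = 0) : du p ≠ 0 := by
  intro hdp
  apply hz₀
  rw [← hsol.energy_eq p z₀, hp, hdp]
  ring

theorem meromorphic_div (hsol : IsOscillatorSolution κ u du) : Meromorphic fun z => du z / u z := by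
  intro z
  have hu : Differentiable ℂ u := fun z => (hsol.hasDerivAt z).differentiableAt
  have hdu : Differentiable ℂ du := fun z => (hsol.hasDerivAt_deriv z).differentiableAt
  exact (hdu.analyticAt z).meromorphicAt.div (hu.analyticAt z).meromorphicAt

theorem eqOn_neg_mul_of_riccati {κ : ℝ} (hsol : IsOscillatorSolution κ u du) {I : Set ℝ}
    (hI : I.OrdConnected) {μ : ℝ → ℝ} (hμ : ∀ t ∈ I, HasDerivAt μ (μ t ^ 2 + κ) t)
    {t₀ : ℝ} (ht₀ : t₀ ∈ I) (h₀ : du t₀ = -μ t₀ * u t₀) : ∀ t ∈ I, du t = -μ t * u t := by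
  have hf : ∀ t ∈ I, HasDerivAt (fun t : ℝ => du t + μ t * u t)
      (μ t • (du t + μ t * u t)) t := fun t ht => by
    refine ((hsol.hasDerivAt_deriv t).comp_ofReal.add
      ((hμ t ht).ofReal_comp.mul (hsol.hasDerivAt t).comp_ofReal)).congr_deriv ?_
    rw [Complex.real_smul]
    push_cast
    ring
  have hcont : ContinuousOn μ I := fun t ht => (hμ t ht).continuousAt.continuousWithinAt
  intro t ht
  have := hI.eqOn_zero_of_hasDerivAt_smul hcont hf ht₀ (by simp [h₀]) ht
  simp only [Pi.zero_apply] at this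
  linear_combination this

end IsOscillatorSolution

theorem exists_isOscillatorSolution_of_sq_add_eq_zero {κ x : ℂ} (h : x ^ 2 + κ = 0) (z₀ : ℂ) :
    ∃ u du, IsOscillatorSolution κ u du ∧ u z₀ ≠ 0 ∧ du z₀ = -x * u z₀ ∧ ∀ p, u p ≠ 0 := by
  have hu : ∀ z, HasDerivAt (fun z => Complex.exp (-x * (z - z₀)))
      (-x * Complex.exp (-x * (z - z₀))) z := fun z => by
    simpa [mul_comm] using (((hasDerivAt_id z).sub_const z₀).const_mul (-x)).cexp
  refine ⟨fun z => Complex.exp (-x * (z - z₀)), fun z => -x * Complex.exp (-x * (z - z₀)),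
    ⟨hu, fun z => ?_⟩, Complex.exp_ne_zero _, rfl, fun p => Complex.exp_ne_zero _⟩
  refine ((hu z).const_mul (-x)).congr_deriv ?_
  linear_combination (Complex.exp (-x * (z - z₀))) * h

theorem exists_isOscillatorSolution_zero {x : ℂ} (hx : x ≠ 0) (z₀ : ℂ) :
    ∃ u du, IsOscillatorSolution 0 u du ∧ u z₀ ≠ 0 ∧ du z₀ = -x * u z₀ ∧ ∃ p, u p = 0 := by
  refine ⟨fun z => 1 - x * (z - z₀), fun _ => -x, ⟨fun z => ?_, fun z => ?_⟩, by simp, by simp,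
    z₀ + x⁻¹, ?_⟩
  · simpa using (((hasDerivAt_id z).sub_const z₀).const_mul x).const_sub 1
  · simpa using hasDerivAt_const z (-x)
  · field_simp
    ring

theorem exists_isOscillatorSolution_of_ne_zero {κ x : ℂ} (hκ : κ ≠ 0) (h : x ^ 2 + κ ≠ 0)
    (z₀ : ℂ) :
    ∃ u du, IsOscillatorSolution κ u du ∧ u z₀ ≠ 0 ∧ du z₀ = -x * u z₀ ∧ ∃ p, u p = 0 := by
  obtain ⟨ω, hω⟩ := IsAlgClosed.exists_pow_nat_eq (-κ) two_pos
  have hω₀ : ω ≠ 0 := by rintro rfl; simp_all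
  have hα : ω - x ≠ 0 := fun h' => h (by linear_combination (-(ω + x)) * h' + hω)
  have hβ : ω + x ≠ 0 := fun h' => h (by linear_combination (x - ω) * h' + hω)
  set e : ℂ → ℂ := fun z => Complex.exp (ω * (z - z₀))
  have hE : ∀ z, HasDerivAt e (ω * e z) z := fun z => by
    simpa [e, mul_comm] using (((hasDerivAt_id z).sub_const z₀).const_mul ω).cexp
  have hE' : ∀ z, HasDerivAt (fun z => (e z)⁻¹) (-ω * (e z)⁻¹) z := fun z => by
    refine ((hE z).inv (Complex.exp_ne_zero _)).congr_deriv ?_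
    field_simp
  refine ⟨fun z => (ω - x) * e z + (ω + x) * (e z)⁻¹,
    fun z => ω * ((ω - x) * e z - (ω + x) * (e z)⁻¹), ⟨fun z => ?_, fun z => ?_⟩, ?_, ?_, ?_⟩
  · exact (((hE z).const_mul (ω - x)).add ((hE' z).const_mul (ω + x))).congr_deriv (by ring)
  · refine ((((hE z).const_mul (ω - x)).sub
      ((hE' z).const_mul (ω + x))).const_mul ω).congr_deriv ?_
    linear_combination ((ω - x) * e z + (ω + x) * (e z)⁻¹) * hω
  · simpa [e] using hω₀
  · simp only [e, sub_self, mul_zero, Complex.exp_zero, inv_one, mul_one]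
    ring
  · set L := Complex.log (-(ω + x) / (ω - x))
    have hL : Complex.exp L = -(ω + x) / (ω - x) :=
      Complex.exp_log (div_ne_zero (neg_ne_zero.mpr hβ) hα)
    refine ⟨z₀ + L / (2 * ω), ?_⟩
    have hsq : e (z₀ + L / (2 * ω)) ^ 2 = -(ω + x) / (ω - x) := by
      rw [← hL, ← Complex.exp_nat_mul]
      congr 1
      field_simp
      ring
    show (ω - x) * e (z₀ + L / (2 * ω)) + (ω + x) * (e (z₀ + L / (2 * ω)))⁻¹ = 0
    generalize e (z₀ + L / (2 * ω)) = w at hsq ⊢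
    have hw : w ≠ 0 := fun hw => div_ne_zero (neg_ne_zero.mpr hβ) hα (by rw [← hsq, hw]; ring)
    field_simp
    rw [hsq]
    field_simp
    ring

theorem exists_isOscillatorSolution (κ x z₀ : ℂ) :
    ∃ u du, IsOscillatorSolution κ u du ∧ u z₀ ≠ 0 ∧ du z₀ = -x * u z₀ ∧
      ((∃ p, u p = 0) ↔ x ^ 2 + κ ≠ 0) := by
  by_cases h : x ^ 2 + κ = 0
  · obtain ⟨u, du, hsol, hu₀, hdu₀, hu⟩ := exists_isOscillatorSolution_of_sq_add_eq_zero h z₀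
    exact ⟨u, du, hsol, hu₀, hdu₀, by simpa [h] using hu⟩
  · suffices ∃ u du, IsOscillatorSolution κ u du ∧ u z₀ ≠ 0 ∧ du z₀ = -x * u z₀ ∧
        ∃ p, u p = 0 by
      simpa [h] using this
    by_cases hκ : κ = 0
    · subst hκ
      exact exists_isOscillatorSolution_zero (by simpa using h) z₀
    · exact exists_isOscillatorSolution_of_ne_zero hκ h z₀

section Poles

variable {𝕜 : Type*} [NontriviallyNormedField 𝕜]

open Classical in
theorem tendsto_sub_mul_div_nhdsNE {u du : 𝕜 → 𝕜} {p : 𝕜} (hu : HasDerivAt u (du p) p)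
    (hdu : ContinuousAt du p) (hsimple : u p = 0 → du p ≠ 0) :
    Tendsto (fun z => (z - p) * du z / u z) (𝓝[≠] p) (𝓝 (if u p = 0 then 1 else 0)) := by
  have hdu' : Tendsto du (𝓝[≠] p) (𝓝 (du p)) := hdu.tendsto.mono_left nhdsWithin_le_nhds
  split_ifs with hp
  · have hslope : Tendsto (fun z => u z / (z - p)) (𝓝[≠] p) (𝓝 (du p)) :=
      (hasDerivAt_iff_tendsto_slope.mp hu).congr fun z => by rw [slope_def_field, hp, sub_zero]
    have := hdu'.div hslope (hsimple hp)
    rw [div_self (hsimple hp)] at this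
    exact this.congr fun z => by simp only [Pi.div_apply, div_div_eq_mul_div, mul_comm]
  · have hsub : Tendsto (fun z => z - p) (𝓝[≠] p) (𝓝 0) := by
      simpa using ((continuous_sub_right p).tendsto p).mono_left nhdsWithin_le_nhds
    have := hsub.mul (hdu'.div (hu.continuousAt.tendsto.mono_left nhdsWithin_le_nhds) hp)
    rw [zero_mul] at this
    exact this.congr fun z => by simp only [Pi.div_apply, mul_div_assoc]

theorem not_eventually_sum_div_pow_eq [CharZero 𝕜] {ι : Type*} [Fintype ι]
    {u du : ι → 𝕜 → 𝕜} {p : 𝕜} (hu : ∀ j, HasDerivAt (u j) (du j p) p)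
    (hdu : ∀ j, ContinuousAt (du j) p) (hsimple : ∀ j, u j p = 0 → du j p ≠ 0) {i : ι}
    (hi : u i p = 0) {k : ℕ} (hk : k ≠ 0) (C : 𝕜) :
    ¬ ∀ᶠ z in 𝓝[≠] p, ∑ j, (du j z / u j z) ^ k = C := by
  classical
  intro hC
  have hlim : Tendsto (fun z => (z - p) ^ k * ∑ j, (du j z / u j z) ^ k) (𝓝[≠] p)
      (𝓝 ((Finset.univ.filter fun j => u j p = 0).card : 𝕜)) := by
    have := tendsto_finsetSum Finset.univ fun j _ =>
      (tendsto_sub_mul_div_nhdsNE (hu j) (hdu j) (hsimple j)).pow k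
    simp only [ite_pow, one_pow, zero_pow hk, Finset.sum_boole] at this
    refine this.congr fun z => ?_
    simp only [Finset.mul_sum, mul_div_assoc, mul_pow]
  have hzero : Tendsto (fun z => (z - p) ^ k * ∑ j, (du j z / u j z) ^ k) (𝓝[≠] p) (𝓝 0) := by
    have hsub : Tendsto (fun z => (z - p) ^ k * C) (𝓝[≠] p) (𝓝 0) := by
      simpa [zero_pow hk] using
        (((continuous_sub_right p).tendsto p).mono_left nhdsWithin_le_nhds).pow k |>.mul_const C
    exact hsub.congr' (hC.mono fun z hz => by simp only [hz])
  have := tendsto_nhds_unique hlim hzero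
  simp only [Nat.cast_eq_zero, Finset.card_eq_zero, Finset.filter_eq_empty_iff] at this
  exact this (Finset.mem_univ i) hi

end Poles

theorem Meromorphic.eventuallyEq_nhdsNE_of_frequently_eq {𝕜 E : Type*} [RCLike 𝕜]
    [NormedAddCommGroup E] [NormedSpace 𝕜 E] {f g : 𝕜 → E} (hf : Meromorphic f)
    (hg : Meromorphic g) {x : 𝕜} (h : ∃ᶠ z in 𝓝[≠] x, f z = g z) (y : 𝕜) :
    f =ᶠ[𝓝[≠] y] g := by
  have hfg : Meromorphic (f - g) := fun z => (hf z).sub (hg z)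
  rw [(hf x).frequently_eq_iff_eventuallyEq (hg x)] at h
  have hx : meromorphicOrderAt (f - g) x = ⊤ :=
    meromorphicOrderAt_eq_top_iff.mpr (by filter_upwards [h] with z hz; simp [hz])
  have hy : meromorphicOrderAt (f - g) y = ⊤ := by
    by_contra hy
    exact hfg.exists_meromorphicOrderAt_ne_top_iff_forall.mp ⟨y, hy⟩ x hx
  filter_upwards [meromorphicOrderAt_eq_top_iff.mp hy] with z hz
  exact sub_eq_zero.mp hz

theorem Complex.frequently_nhdsNE_ofReal {P : ℂ → Prop} {x : ℝ} (h : ∀ᶠ t : ℝ in 𝓝 x, P t) :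
    ∃ᶠ z in 𝓝[≠] (x : ℂ), P z :=
  ((continuous_ofReal.continuousWithinAt (s := {x}ᶜ)).tendsto_nhdsWithin fun _ ↦ by
    simp).frequently (h.filter_mono nhdsWithin_le_nhds).frequently

theorem sq_add_eq_zero_of_sum_pow_eq {ι : Type*} [Fintype ι] {I : Set ℝ}
    (hI : IsOpen I) (hconn : I.OrdConnected) {μ : ι → ℝ → ℝ} {κ : ι → ℝ}
    (hode : ∀ i, ∀ t ∈ I, HasDerivAt (μ i) (μ i t ^ 2 + κ i) t) {k : ℕ} (hk : k ≠ 0)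
    (hQ : ∀ t ∈ I, ∀ s ∈ I, ∑ i, μ i t ^ k = ∑ i, μ i s ^ k) {t₀ : ℝ} (ht₀ : t₀ ∈ I) (i : ι) :
    μ i t₀ ^ 2 + κ i = 0 := by
  choose u du hsol hu₀ hdu₀ hzeros using
    fun j => exists_isOscillatorSolution (κ j) (μ j t₀) t₀
  have hlin : ∀ j, ∀ t ∈ I, du j t = -μ j t * u j t := fun j =>
    (hsol j).eqOn_neg_mul_of_riccati hconn (hode j) ht₀ (hdu₀ j)
  set C : ℂ := (-1) ^ k * ∑ j, (μ j t₀ : ℂ) ^ k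
  have hreal : ∀ᶠ t : ℝ in 𝓝 t₀, ∑ j, (du j t / u j t) ^ k = C := by
    have hne : ∀ j, ∀ᶠ t : ℝ in 𝓝 t₀, u j t ≠ 0 := fun j =>
      ((hsol j).hasDerivAt t₀).comp_ofReal.continuousAt.eventually_ne (hu₀ j)
    filter_upwards [hI.mem_nhds ht₀, eventually_all.mpr hne] with t ht hne
    simp only [C, hlin _ t ht, mul_div_cancel_right₀ _ (hne _), neg_pow (μ _ _ : ℂ),
      ← Finset.mul_sum]
    exact_mod_cast congrArg _ (hQ t ht t₀ ht₀)
  have hmero : Meromorphic fun z => ∑ j, (du j z / u j z) ^ k := fun z =>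
    MeromorphicAt.fun_sum fun j _ => ((hsol j).meromorphic_div z).pow k
  have hC := hmero.eventuallyEq_nhdsNE_of_frequently_eq (fun z => MeromorphicAt.const C z)
    (Complex.frequently_nhdsNE_ofReal hreal)
  have hsimple : ∀ j p, u j p = 0 → du j p ≠ 0 := fun j p hp => by
    refine (hsol j).du_ne_zero_of_eq_zero (z₀ := t₀) ?_ hp
    rw [hdu₀ j, show (-(μ j t₀ : ℂ) * u j t₀) ^ 2 + κ j * u j t₀ ^ 2
      = u j t₀ ^ 2 * ((μ j t₀ : ℂ) ^ 2 + κ j) by ring]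
    exact mul_ne_zero (pow_ne_zero 2 (hu₀ j)) ((hzeros j).mp ⟨p, hp⟩)
  by_contra hi
  obtain ⟨p, hp⟩ := (hzeros i).mpr (by exact_mod_cast hi)
  exact not_eventually_sum_div_pow_eq (fun j => (hsol j).hasDerivAt p)
    (fun j => ((hsol j).hasDerivAt_deriv p).continuousAt) (hsimple · p) hp hk C (hC p)

/-- If `μ₁, …, μₙ` solve the Riccati equations `μᵢ' = μᵢ² + κᵢ` on a connected open
interval `I`, and for some `k ≥ 1` the power sum `Q_k(t) = ∑ᵢ μᵢ(t)^k` is constant on `I`,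
then each `μᵢ` is constant on `I`. -/
theorem stmt7 (n : ℕ) (I : Set ℝ) (hI : IsOpen I) (hconn : I.OrdConnected)
    (μ : Fin n → ℝ → ℝ) (κ : Fin n → ℝ)
    (hode : ∀ i, ∀ t ∈ I, HasDerivAt (μ i) ((μ i t) ^ 2 + κ i) t)
    (k : ℕ) (hk : 1 ≤ k)
    (hQ : ∀ t ∈ I, ∀ s ∈ I, ∑ i, μ i t ^ k = ∑ i, μ i s ^ k) :
    ∀ i, ∀ t ∈ I, ∀ s ∈ I, μ i t = μ i s := by
  intro i t ht s hs
  have hder : ∀ τ ∈ I, HasDerivAt (μ i) 0 τ := fun τ hτ => by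
    simpa [sq_add_eq_zero_of_sum_pow_eq hI hconn hode (by omega) hQ hτ i] using hode i τ hτ
  exact hI.is_const_of_deriv_eq_zero hconn.isPreconnected
    (fun τ hτ => (hder τ hτ).differentiableAt.differentiableWithinAt)
    (fun τ hτ => (hder τ hτ).deriv) ht hs
end

section
/- Let A be an n×n complex matrix and suppose that for all k in some set of n consecutive integers {m, m+1, ..., m+n−1} (m ≥ 1) and for a fixed vector of values (c_m,...,c_{m+n-1}), one has tr(A^k) = c_k. Then the multiset of eigenvalues of A is one of only finitely many possibilities (i.e., the set of possible characteristic polynomials is finite). -/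
/-! Writing the eigenvalues of `A` as `v : Fin n → ℂ`, `tr (A ^ k)` is the power sum `∑ i, v i ^ k`,
so it suffices that the system `∑ i, v i ^ (m + j) = c (m + j)`, `j < n`, has finitely many
solutions. Its leading forms `∑ i, X i ^ (m + j)` have no common zero besides `0`, so by the
Nullstellensatz they generate an ideal containing a power of the ideal of variables. Replacing
each leading form by the constant it equals then lowers degrees, so the quotient of the polynomial
ring by the system is finite-dimensional, and each coordinate of a solution is a root of a fixed
nonzero polynomial. -/

open Finset

theorem Multiset.exists_map_univ_val_eq {α : Type*} {n : ℕ} (s : Multiset α)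
    (hs : Multiset.card s = n) : ∃ v : Fin n → α, Finset.univ.val.map v = s := by
  obtain ⟨l, rfl⟩ : ∃ l : List α, (l : Multiset α) = s := Quotient.exists_rep s
  rw [Multiset.coe_card] at hs
  subst hs
  exact ⟨l.get, by rw [Fin.univ_val_map, List.ofFn_get]⟩

section

open Polynomial

namespace Matrix

variable {n K : Type*} [Fintype n] [DecidableEq n] [Field K] [IsAlgClosed K]

lemma card_roots_charpoly (A : Matrix n n K) :
    Multiset.card A.charpoly.roots = Fintype.card n := by
  rw [IsAlgClosed.card_roots_eq_natDegree, charpoly_natDegree_eq_dim]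

lemma det_sub_algebraMap_eq_prod_roots_charpoly (A : Matrix n n K) (r : K) :
    (A - algebraMap K (Matrix n n K) r).det = (A.charpoly.roots.map fun x => x - r).prod := by
  have hneg : (A.charpoly.roots.map fun x => x - r) =
      (A.charpoly.roots.map fun x => r - x).map Neg.neg := by
    simp [Multiset.map_map]
  rw [show algebraMap K (Matrix n n K) r = scalar n r from rfl, hneg, Multiset.prod_map_neg,
    Multiset.card_map, card_roots_charpoly, ← neg_sub, det_neg, ← eval_charpoly,
    (IsAlgClosed.splits _).eval_eq_prod_roots_of_monic A.charpoly_monic]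

lemma det_aeval_eq_prod_roots_charpoly (A : Matrix n n K) (p : K[X]) :
    (aeval A p).det = (A.charpoly.roots.map fun x => p.eval x).prod := by
  let φ : K[X] →* K := detMonoidHom.comp (aeval A : K[X] →ₐ[K] Matrix n n K).toMonoidHom
  have hφ (q : K[X]) : (aeval A q).det = φ q := rfl
  rw [hφ, (IsAlgClosed.splits p).eq_prod_roots, map_mul, map_multiset_prod]
  simp only [← hφ, Multiset.map_map, Function.comp_def, map_sub, aeval_X, aeval_C, eval_mul,
    eval_C, eval_multiset_prod, eval_sub, eval_X, det_sub_algebraMap_eq_prod_roots_charpoly,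
    Multiset.prod_map_mul, Multiset.map_const', Multiset.prod_replicate, card_roots_charpoly,
    Algebra.algebraMap_eq_smul_one p.leadingCoeff, det_smul, det_one, mul_one]
  rw [Multiset.prod_map_prod_map]

lemma roots_charpoly_pow (A : Matrix n n K) (k : ℕ) :
    (A ^ k).charpoly.roots = A.charpoly.roots.map (· ^ k) := by
  suffices (A ^ k).charpoly = ((A.charpoly.roots.map (· ^ k)).map fun x => X - C x).prod by
    rw [this, roots_multiset_prod_X_sub_C]
  refine Polynomial.funext fun y => ?_
  have hy : scalar n y - A ^ k = aeval A (C y - X ^ k) := by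
    rw [map_sub, aeval_C, map_pow, aeval_X]; rfl
  rw [eval_charpoly, hy, det_aeval_eq_prod_roots_charpoly, eval_multiset_prod, Multiset.map_map,
    Multiset.map_map]
  simp [Function.comp_def]

lemma trace_pow_eq_sum_roots_charpoly (A : Matrix n n K) (k : ℕ) :
    (A ^ k).trace = (A.charpoly.roots.map (· ^ k)).sum := by
  rw [trace_eq_sum_roots_charpoly, roots_charpoly_pow]

end Matrix

theorem eq_zero_of_forall_sum_pow_eq_zero {ι K : Type*} [Fintype ι] [Field K] [CharZero K]
    (v : ι → K) {m N : ℕ} (hm : m ≠ 0) (hN : Fintype.card ι ≤ N)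
    (h : ∀ j < N, ∑ i, v i ^ (m + j) = 0) : v = 0 := by
  classical
  have hpoly (q : K[X]) (hq : q.natDegree < N) : ∑ i, v i ^ m * q.eval (v i) = 0 := by
    simp only [eval_eq_sum_range' hq, mul_sum, mul_left_comm (v _ ^ m), ← pow_add]
    rw [sum_comm]
    exact sum_eq_zero fun j hj => by rw [← mul_sum, h j (mem_range.1 hj), mul_zero]
  funext i₀
  set s := univ.image v
  have hi₀ : v i₀ ∈ s := mem_image_of_mem v (mem_univ i₀)
  -- testing the equations against `X ^ m * L` counts the indices where `v` equals `v i₀`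
  set L := Lagrange.basis s id (v i₀)
  have hdeg : L.natDegree < N := by
    have : #s ≤ N := card_image_le.trans hN
    rw [Lagrange.natDegree_basis (Set.injOn_id _) hi₀]
    have := card_pos.2 ⟨_, hi₀⟩
    omega
  have hself : L.eval (v i₀) = 1 := Lagrange.eval_basis_self (v := id) (Set.injOn_id _) hi₀
  have hother (i : ι) (hi : v i ≠ v i₀) : L.eval (v i) = 0 :=
    Lagrange.eval_basis_of_ne (v := id) (Ne.symm hi) (mem_image_of_mem v (mem_univ i))
  have hcount : (#{i | v i = v i₀} : K) * v i₀ ^ m = 0 := by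
    rw [← hpoly L hdeg, card_filter, Nat.cast_sum, sum_mul]
    refine sum_congr rfl fun i _ => ?_
    by_cases hi : v i = v i₀
    · simp [hi, hself]
    · simp [hi, hother i hi]
  have hne : (#{i | v i = v i₀} : K) ≠ 0 := by
    exact_mod_cast (card_pos.2 ⟨i₀, by simp⟩).ne'
  simpa [hne, hm] using hcount

end

namespace MvPolynomial

section Homogeneous

variable {σ ι R : Type*} [CommSemiring R]

theorem homogeneousComponent_mul_of_isHomogeneous_s18 (g : MvPolynomial σ R) {p : MvPolynomial σ R}
    {e : ℕ} (hp : p.IsHomogeneous e) (d : ℕ) :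
    homogeneousComponent d (g * p)
      = (if e ≤ d then homogeneousComponent (d - e) g else 0) * p := by
  have hterm (k : ℕ) : homogeneousComponent d (homogeneousComponent k g * p)
      = if k + e = d then homogeneousComponent k g * p else 0 := by
    simp_rw [homogeneousComponent_of_mem ((homogeneousComponent_isHomogeneous k g).mul hp),
      eq_comm]
  conv_lhs => rw [← sum_homogeneousComponent g, sum_mul, map_sum]
  simp_rw [hterm]
  split_ifs with he
  · rw [sum_eq_single (d - e) (fun k _ hk => if_neg (by omega)) fun hk => ?_, if_pos (by omega)]
    rw [homogeneousComponent_eq_zero _ _ (by simp at hk; omega), zero_mul, ite_self]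
  · exact sum_eq_zero fun k _ => if_neg (by omega)

theorem exists_isHomogeneous_eq_sum_mul_of_mem_span [Fintype ι] {P : ι → MvPolynomial σ R}
    {d : ι → ℕ} (hP : ∀ j, (P j).IsHomogeneous (d j)) {f : MvPolynomial σ R} {e : ℕ}
    (hf : f.IsHomogeneous e) (hfP : f ∈ Ideal.span (Set.range P)) :
    ∃ h : ι → MvPolynomial σ R, (∀ j, (h j).IsHomogeneous (e - d j)) ∧ f = ∑ j, h j * P j := by
  obtain ⟨g, rfl⟩ := Ideal.mem_span_range_iff_exists_fun.1 hfP
  refine ⟨fun j => if d j ≤ e then homogeneousComponent (e - d j) (g j) else 0, fun j => ?_, ?_⟩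
  · dsimp only
    split_ifs
    exacts [homogeneousComponent_isHomogeneous _ _, isHomogeneous_zero _ _ _]
  · rw [← homogeneousComponent_eq_self hf, map_sum]
    exact sum_congr rfl fun j _ => homogeneousComponent_mul_of_isHomogeneous_s18 _ (hP j) e

end Homogeneous

theorem finite_quotient_span_sub_C {σ ι R : Type*} [Finite σ] [Fintype ι] [CommRing R]
    {P : ι → MvPolynomial σ R} {d : ι → ℕ}
    (hP : ∀ j, (P j).IsHomogeneous (d j)) (hd : ∀ j, d j ≠ 0)
    (hrad : idealOfVars σ R ≤ (Ideal.span (Set.range P)).radical) (c : ι → R) :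
    Module.Finite R (MvPolynomial σ R ⧸ Ideal.span (Set.range fun j => P j - C (c j))) := by
  set I := Ideal.span (Set.range fun j => P j - C (c j))
  obtain ⟨B, hB⟩ := Ideal.exists_pow_le_of_le_radical_of_fg hrad (idealOfVars_fg σ R)
  let mk := Ideal.Quotient.mkₐ R I
  let M := (restrictTotalDegree σ R B).map mk.toLinearMap
  have hPc (j : ι) : mk (P j) = algebraMap R _ (c j) := by
    rw [← sub_eq_zero, ← mk.commutes, algebraMap_eq, ← map_sub]
    exact Ideal.Quotient.eq_zero_iff_mem.2 (Ideal.subset_span ⟨j, rfl⟩)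
  have hhom (e : ℕ) : ∀ f : MvPolynomial σ R, f.IsHomogeneous e → mk f ∈ M := by
    induction e using Nat.strong_induction_on with
    | _ e IH =>
      intro f hf
      by_cases he : e ≤ B
      · exact Submodule.mem_map_of_mem
          ((mem_restrictTotalDegree _ _ _).2 (hf.totalDegree_le.trans he))
      have hfB : f ∈ idealOfVars σ R ^ B := (mem_pow_idealOfVars_iff _ _).2 fun x hx => by
        rw [Finsupp.degree_eq_weight_one, ← Pi.one_def, hf (mem_support_iff.1 hx)]; omega
      obtain ⟨h, hh, rfl⟩ := exists_isHomogeneous_eq_sum_mul_of_mem_span hP hf (hB hfB)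
      rw [map_sum]
      refine Submodule.sum_mem _ fun j _ => ?_
      rw [map_mul, hPc, mul_comm, ← Algebra.smul_def]
      exact Submodule.smul_mem _ _ (IH _ (by have := hd j; omega) _ (hh j))
  refine Module.Finite.of_surjective (mk.toLinearMap ∘ₗ (restrictTotalDegree σ R B).subtype)
    fun y => ?_
  obtain ⟨f, rfl⟩ := Ideal.Quotient.mkₐ_surjective R I y
  have hf : mk f ∈ M := by
    rw [← sum_homogeneousComponent f, map_sum]
    exact Submodule.sum_mem _ fun k _ => hhom k _ (homogeneousComponent_isHomogeneous k f)
  obtain ⟨x, hx, hxf⟩ := Submodule.mem_map.1 hf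
  exact ⟨⟨x, hx⟩, hxf⟩

theorem finite_zeroLocus_of_finite_quotient {σ K : Type*} [Finite σ] [Field K]
    (I : Ideal (MvPolynomial σ K)) [Module.Finite K (MvPolynomial σ K ⧸ I)] :
    (zeroLocus K I).Finite := by
  choose q hq_monic hq using fun i => IsIntegral.of_finite K (Ideal.Quotient.mk I (X i))
  refine (Set.Finite.pi fun i => (q i).finite_setOfPred_isRoot (hq_monic i).ne_zero).subset
    fun v hv => Set.mem_univ_pi.2 fun i => ?_
  let ev := Ideal.Quotient.liftₐ I (aeval v) hv
  have hev : ev (Ideal.Quotient.mk I (X i)) = v i := aeval_X v i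
  have := congrArg ev (hq i)
  rw [← Polynomial.aeval_def, ← Polynomial.aeval_algHom_apply, hev, map_zero] at this
  simpa using this

end MvPolynomial

open MvPolynomial in
theorem finite_setOf_forall_sum_pow_eq {ι K : Type*} [Fintype ι] [Field K] [IsAlgClosed K]
    [CharZero K] {m N : ℕ} (hm : m ≠ 0) (hN : Fintype.card ι ≤ N) (c : Fin N → K) :
    {v : ι → K | ∀ j : Fin N, ∑ i, v i ^ (m + j) = c j}.Finite := by
  let P (j : Fin N) : MvPolynomial ι K := psum ι K (m + j)
  have hP (j : Fin N) : (P j).IsHomogeneous (m + j) :=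
    IsHomogeneous.sum _ _ _ fun i _ => isHomogeneous_X_pow i _
  have hrad : idealOfVars ι K ≤ (Ideal.span (Set.range P)).radical := by
    rw [← vanishingIdeal_zeroLocus_eq_radical (K := K), Ideal.span_le]
    rintro _ ⟨i, rfl⟩ v hv
    have hv0 : v = 0 := eq_zero_of_forall_sum_pow_eq_zero v hm hN fun j hj => by
      simpa [P, psum] using hv (P ⟨j, hj⟩) (Ideal.subset_span ⟨_, rfl⟩)
    simp [hv0]
  have := finite_quotient_span_sub_C hP (fun j => by omega) hrad c
  refine (finite_zeroLocus_of_finite_quotient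
    (Ideal.span (Set.range fun j => P j - C (c j)))).subset fun v hv p hp => ?_
  refine (Ideal.span_le.2 ?_ hp : p ∈ RingHom.ker (aeval v))
  rintro _ ⟨j, rfl⟩
  simp [P, psum, hv j]

open Matrix Polynomial

theorem stmt18_general (n m : ℕ) (hm : 1 ≤ m) (c : ℕ → ℂ) :
    ∃ S : Finset (Polynomial ℂ), ∀ A : Matrix (Fin n) (Fin n) ℂ,
      (∀ k ∈ Finset.Icc m (m + n - 1), Matrix.trace (A ^ k) = c k) →
      A.charpoly ∈ S := by
  have hfin := finite_setOf_forall_sum_pow_eq (ι := Fin n) (K := ℂ) (by omega : m ≠ 0)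
    (Fintype.card_fin n).le fun j => c (m + j)
  refine ⟨(hfin.image fun v => ∏ i, (X - C (v i))).toFinset, fun A hA => ?_⟩
  obtain ⟨v, hv⟩ := A.charpoly.roots.exists_map_univ_val_eq
    (A.card_roots_charpoly.trans (Fintype.card_fin n))
  rw [Set.Finite.mem_toFinset]
  refine ⟨v, fun j => ?_, ?_⟩
  · rw [← hA (m + j) (Finset.mem_Icc.2 ⟨by omega, by omega⟩), trace_pow_eq_sum_roots_charpoly,
      ← hv, Multiset.map_map]
    rfl
  · rw [(IsAlgClosed.splits _).eq_prod_roots_of_monic A.charpoly_monic, ← hv, Multiset.map_map]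
    rfl

/-- If the traces `tr(A^k)` are prescribed values `c_k` for `k` in a window of `n`
consecutive integers `{m, …, m+n−1}` with `m ≥ 1`, then the characteristic polynomial of
the `n×n` complex matrix `A` belongs to a finite set depending only on the data. -/
theorem stmt18 (n m : ℕ) (hn : 1 ≤ n) (hm : 1 ≤ m) (c : ℕ → ℂ) :
    ∃ S : Finset (Polynomial ℂ), ∀ A : Matrix (Fin n) (Fin n) ℂ,
      (∀ k ∈ Finset.Icc m (m + n - 1), Matrix.trace (A ^ k) = c k) →
      A.charpoly ∈ S :=
  stmt18_general n m hm c
end
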